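/- arXiv:2203.01911 — 8 statements merged into one kernel-verified Lean document; each statement's English description precedes it below -/
import Mathlib

section
/- Let R be an F-finite ring of prime characteristic p and let P be a prime ideal of R. If c₀ and c₁ are elements not in the Cartier core C(P), then c₀c₁ ∉ C(P). Consequently, if C(P) is a proper ideal, then C(P) is a prime ideal. -/
/-- φ : R →+ R is an `R`-linear map `F_*^e R → R`, i.e. φ(r^{p^e} s) = r φ(s). -/
def IsCartierMap {R : Type*} [CommRing R] (p e : ℕ) (φ : R →+ R) : Prop :=
  ∀ r s : R, φ (r ^ p ^ e * s) = r * φ s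

/-- `R` is F-finite: the Frobenius `x ↦ x^p` is a finite ring map. -/
def FFinite (R : Type*) [CommRing R] (p : ℕ) : Prop :=
  ∃ f : R →+* R, (∀ x, f x = x ^ p) ∧ f.Finite

/-- The Cartier core of an ideal `J`. -/
def cartierCore {R : Type*} [CommRing R] (p : ℕ) (J : Ideal R) : Ideal R where
  carrier := {r : R | ∀ e, 0 < e → ∀ φ : R →+ R, IsCartierMap p e φ → φ r ∈ J}
  add_mem' := by
    intro a b ha hb e he φ hφ
    rw [map_add]
    exact J.add_mem (ha e he φ hφ) (hb e he φ hφ)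
  zero_mem' := by
    intro e he φ hφ
    rw [map_zero]
    exact J.zero_mem
  smul_mem' := by
    intro a x hx e he φ hφ
    have hψ : IsCartierMap p e (φ.comp (AddMonoidHom.mulLeft a)) := by
      intro r s
      simp only [AddMonoidHom.coe_comp, Function.comp_apply, AddMonoidHom.coe_mulLeft]
      rw [mul_left_comm, hφ]
    simpa using hx e he _ hψ

/-- `R` is F-pure (Frobenius split): some iterate of Frobenius splits. -/
def IsFPure (R : Type*) [CommRing R] (p : ℕ) : Prop :=
  ∃ e, 0 < e ∧ ∃ φ : R →+ R, IsCartierMap p e φ ∧ φ 1 = 1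

/-- The Frobenius bracket power `J^{[q]}` of an ideal. -/
def frobPow {S : Type*} [CommRing S] (q : ℕ) (J : Ideal S) : Ideal S :=
  Ideal.span ((fun f => f ^ q) '' (J : Set S))

/-- `J` is uniformly F-compatible. -/
def UniformlyFCompatible {R : Type*} [CommRing R] (p : ℕ) (J : Ideal R) : Prop :=
  ∀ e, 0 < e → ∀ φ : R →+ R, IsCartierMap p e φ → ∀ x ∈ J, φ x ∈ J

/-- A regular (Noetherian) ring: every localization at a prime is a regular local ring. -/
def IsRegularRing' (S : Type*) [CommRing S] : Prop :=
  IsNoetherianRing S ∧ ∀ (P : Ideal S) [P.IsPrime],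
    ∃ s : Finset (Localization.AtPrime P),
      Ideal.span (s : Set (Localization.AtPrime P)) =
        IsLocalRing.maximalIdeal (Localization.AtPrime P) ∧
      (s.card : WithBot (WithTop ℕ)) = ringKrullDim (Localization.AtPrime P)


lemma mem_cartierCore_iff {R : Type*} [CommRing R] (p : ℕ) (J : Ideal R) (r : R) :
    r ∈ cartierCore p J ↔ ∀ e, 0 < e → ∀ φ : R →+ R, IsCartierMap p e φ → φ r ∈ J := Iff.rfl

/-- the complement of the Cartier core of a prime is multiplicatively closed;
consequently a proper Cartier core of a prime is prime. -/
theorem cartierCore_isPrime {R : Type*} [CommRing R] [IsNoetherianRing R] (p : ℕ) [Fact p.Prime]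
    [CharP R p] (hFF : FFinite R p) (P : Ideal R) (hP : P.IsPrime) :
    (∀ c₀ c₁ : R, c₀ ∉ cartierCore p P → c₁ ∉ cartierCore p P → c₀ * c₁ ∉ cartierCore p P) ∧
    (cartierCore p P ≠ ⊤ → (cartierCore p P).IsPrime) := by
  have key : ∀ c₀ c₁ : R, c₀ ∉ cartierCore p P → c₁ ∉ cartierCore p P →
      c₀ * c₁ ∉ cartierCore p P := by
    intro c₀ c₁ h₀ h₁ hmul
    rw [mem_cartierCore_iff] at h₀ h₁
    push_neg at h₀ h₁
    obtain ⟨e₀, he₀, φ₀, hφ₀, hc₀⟩ := h₀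
    obtain ⟨e₁, he₁, φ₁, hφ₁, hc₁⟩ := h₁
    have hppos : 0 < p := (Fact.out (p := p.Prime)).pos
    have hq₀ : 1 ≤ p ^ e₀ := Nat.one_le_pow _ _ hppos
    have hq₁ : 1 ≤ p ^ e₁ := Nat.one_le_pow _ _ hppos
    set u : R := φ₁ c₁ with hu
    set ψ : R →+ R := φ₀.comp ((AddMonoidHom.mulLeft (u ^ (p ^ e₀ - 1))).comp
      (φ₁.comp (AddMonoidHom.mulLeft (c₀ ^ (p ^ e₁ - 1))))) with hψdef
    have hψ : IsCartierMap p (e₀ + e₁) ψ := by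
      intro r s
      simp only [hψdef, AddMonoidHom.coe_comp, Function.comp_apply, AddMonoidHom.coe_mulLeft]
      have h1 : c₀ ^ (p ^ e₁ - 1) * (r ^ p ^ (e₀ + e₁) * s) =
          (r ^ p ^ e₀) ^ p ^ e₁ * (c₀ ^ (p ^ e₁ - 1) * s) := by
        rw [← pow_mul, ← pow_add]; ring
      rw [h1, hφ₁, mul_left_comm, hφ₀]
    have hmem : ψ (c₀ * c₁) ∈ P :=
      hmul (e₀ + e₁) (Nat.add_pos_left he₀ e₁) ψ hψ
    have h2 : c₀ ^ (p ^ e₁ - 1) * (c₀ * c₁) = c₀ ^ p ^ e₁ * c₁ := by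
      rw [← Nat.sub_add_cancel hq₁, pow_succ]; ring_nf
      rw [Nat.add_sub_cancel_left]
    have h3 : ψ (c₀ * c₁) = u * φ₀ c₀ := by
      simp only [hψdef, AddMonoidHom.coe_comp, Function.comp_apply, AddMonoidHom.coe_mulLeft]
      rw [h2, hφ₁]
      have h4 : u ^ (p ^ e₀ - 1) * (c₀ * u) = u ^ p ^ e₀ * c₀ := by
        rw [← Nat.sub_add_cancel hq₀, pow_succ]; ring_nf
        rw [Nat.add_sub_cancel_left]
      rw [h4, hφ₀]
    rw [h3] at hmem
    rcases hP.mem_or_mem hmem with h | h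
    · exact hc₁ h
    · exact hc₀ h
  refine ⟨key, fun hne => ⟨hne, ?_⟩⟩
  intro x y hxy
  by_contra h
  push_neg at h
  exact key x y h.1 h.2 hxy
end

section
/- Let R be an F-finite ring of prime characteristic, let Q be a P-primary ideal for a prime P of R, and suppose the Cartier core C(P) is a proper ideal of R. Then C(Q) ⊆ Q. -/
/-- if Q is P-primary and C(P) is proper then C(Q) ⊆ Q. -/
theorem cartierCore_primary_le {R : Type*} [CommRing R] [IsNoetherianRing R] (p : ℕ)
    [Fact p.Prime] [CharP R p] (hFF : FFinite R p) (P Q : Ideal R) (hP : P.IsPrime)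
    (hQ : Q.IsPrimary) (hrad : Q.radical = P) (hproper : cartierCore p P ≠ ⊤) :
    cartierCore p Q ≤ Q := by
  intro r hr
  have h1 : (1 : R) ∉ cartierCore p P := fun h => hproper ((Ideal.eq_top_iff_one _).mpr h)
  have h1' : ¬ ∀ e, 0 < e → ∀ φ : R →+ R, IsCartierMap p e φ → φ 1 ∈ P := h1
  push_neg at h1'
  obtain ⟨e, he, φ, hφ, hφ1⟩ := h1'
  -- the twisted map
  set ψ : R →+ R := φ.comp (AddMonoidHom.mulLeft (r ^ (p ^ e - 1))) with hψdef
  have hψ : IsCartierMap p e ψ := by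
    intro s t
    simp only [hψdef, AddMonoidHom.coe_comp, Function.comp_apply, AddMonoidHom.coe_mulLeft]
    rw [mul_left_comm, hφ]
  have hq : ψ r ∈ Q := hr e he ψ hψ
  have hpe : 0 < p ^ e := pow_pos (Fact.out (p := p.Prime)).pos e
  have hψr : ψ r = r * φ 1 := by
    have : r ^ (p ^ e - 1) * r = r ^ p ^ e * 1 := by
      rw [mul_one, ← pow_succ, Nat.sub_add_cancel hpe]
    simp only [hψdef, AddMonoidHom.coe_comp, Function.comp_apply, AddMonoidHom.coe_mulLeft]
    rw [this, hφ]
  rw [hψr] at hq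
  rcases (Ideal.isPrimary_iff.mp hQ).2 hq with h | h
  · exact h
  · exact absurd (hrad ▸ h) hφ1
end

section
/- Let R be an F-finite F-pure ring of prime characteristic (i.e., there exist e > 0 and an R-linear map φ : F_*^e R → R with φ(F_*^e 1) = 1). Then for every ideal J of R, C(C(J)) = C(J), where C denotes the Cartier core. -/
/-- in an F-pure ring the Cartier core is idempotent. -/
theorem cartierCore_idem {R : Type*} [CommRing R] [IsNoetherianRing R] (p : ℕ) [Fact p.Prime]
    [CharP R p] (hFF : FFinite R p) (hFP : IsFPure R p) (J : Ideal R) :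
    cartierCore p (cartierCore p J) = cartierCore p J := by
  ext r
  constructor
  · -- C(C(J)) ⊆ C(J), using F-purity
    intro hr
    obtain ⟨e, he, φ₀, hC, h1⟩ := hFP
    set ψ := φ₀.comp (AddMonoidHom.mulLeft (r ^ (p ^ e - 1))) with hψdef
    have hψ : IsCartierMap p e ψ := by
      intro a s
      simp only [hψdef, AddMonoidHom.coe_comp, Function.comp_apply, AddMonoidHom.coe_mulLeft]
      rw [mul_left_comm, hC]
    have hmem := hr e he ψ hψ
    have hψr : ψ r = r := by
      have hq : 0 < p ^ e := pow_pos (Fact.out (p := p.Prime)).pos e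
      have hpow : r ^ (p ^ e - 1) * r = r ^ p ^ e * 1 := by
        rw [mul_one, ← pow_succ, Nat.sub_add_cancel hq]
      simp only [hψdef, AddMonoidHom.coe_comp, Function.comp_apply, AddMonoidHom.coe_mulLeft]
      rw [hpow, hC, h1, mul_one]
    rwa [hψr] at hmem
  · -- C(J) ⊆ C(C(J)), by composability of Cartier maps
    intro hr e he φ hφ e' he' φ' hφ'
    have hcomp : IsCartierMap p (e + e') (φ'.comp φ) := by
      intro a s
      simp only [AddMonoidHom.coe_comp, Function.comp_apply]
      rw [pow_add, mul_comm (p ^ e), pow_mul, hφ, hφ']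
    exact hr (e + e') (Nat.add_pos_left he e') (φ'.comp φ) hcomp
end

section
/- Let R be an F-finite F-pure ring of prime characteristic p. Then for every ideal J of R, the Cartier core C(J) is a radical ideal. -/
lemma isCartierMap_comp {R : Type*} [CommRing R] {p e d : ℕ} {φ ψ : R →+ R}
    (hφ : IsCartierMap p e φ) (hψ : IsCartierMap p d ψ) :
    IsCartierMap p (e + d) (φ.comp ψ) := by
  intro r s
  simp only [AddMonoidHom.coe_comp, Function.comp_apply]
  rw [pow_add, pow_mul, hψ, hφ]

lemma exists_split_iter {R : Type*} [CommRing R] {p d : ℕ} {ψ : R →+ R}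
    (hψ : IsCartierMap p d ψ) (hψ1 : ψ 1 = 1) :
    ∀ k : ℕ, 0 < k → ∃ φ : R →+ R, IsCartierMap p (k * d) φ ∧ φ 1 = 1 := by
  intro k hk
  induction k with
  | zero => omega
  | succ n ih =>
    rcases Nat.eq_or_lt_of_le hk with h | h
    · exact ⟨ψ, by rw [← h]; simpa using hψ, hψ1⟩
    · obtain ⟨φ, hφ, hφ1⟩ := ih (by omega)
      refine ⟨φ.comp ψ, ?_, by simp [hφ1, hψ1]⟩
      have := isCartierMap_comp hφ hψ
      rwa [show n * d + d = (n + 1) * d by ring] at this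

lemma cartierCore_compat {R : Type*} [CommRing R] {p : ℕ} {J : Ideal R} {x : R}
    (hx : x ∈ cartierCore p J) {e : ℕ} (he : 0 < e) {φ : R →+ R}
    (hφ : IsCartierMap p e φ) : φ x ∈ cartierCore p J := by
  intro e' he' θ hθ
  have : (θ.comp φ) x ∈ J := hx (e' + e) (by omega) _ (isCartierMap_comp hθ hφ)
  simpa using this

/-- in an F-pure ring the Cartier core of any ideal is radical. -/
theorem cartierCore_radical {R : Type*} [CommRing R] [IsNoetherianRing R] (p : ℕ) [Fact p.Prime]
    [CharP R p] (hFF : FFinite R p) (hFP : IsFPure R p) (J : Ideal R) :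
    (cartierCore p J).radical = cartierCore p J := by
  refine le_antisymm ?_ (Ideal.le_radical)
  intro r hr
  obtain ⟨n, hn⟩ := hr
  rcases Nat.eq_zero_or_pos n with rfl | hn0
  · -- then 1 ∈ cartierCore, so r ∈ it
    simp only [pow_zero] at hn
    have := (cartierCore p J).smul_mem r hn
    simpa using this
  obtain ⟨d, hd, ψ, hψ, hψ1⟩ := hFP
  have hp2 : 2 ≤ p := (Fact.out : p.Prime).two_le
  set k := n with hk
  have hle : n ≤ p ^ (k * d) := le_of_lt <| by
    calc n < 2 ^ n := Nat.lt_two_pow_self (n := n)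
    _ ≤ p ^ (k * d) := Nat.pow_le_pow_left hp2 n |>.trans
        (Nat.pow_le_pow_right (by omega) (by nlinarith))
  obtain ⟨φ, hφ, hφ1⟩ := exists_split_iter hψ hψ1 k (by omega)
  have hmem : r ^ p ^ (k * d) ∈ cartierCore p J := by
    have : r ^ p ^ (k * d) = r ^ (p ^ (k * d) - n) * r ^ n := by
      rw [← pow_add]; congr 1; omega
    rw [this]
    exact (cartierCore p J).mul_mem_left _ hn
  have hφr : φ (r ^ p ^ (k * d)) = r := by
    have := hφ r 1
    rw [mul_one, hφ1, mul_one] at this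
    exact this
  have := cartierCore_compat hmem (e := k * d)
      (by have : 0 < k * d := Nat.mul_pos hn0 hd; exact this) hφ
  rwa [hφr] at this
end

section
/- Let R be an F-finite F-pure ring of prime characteristic. An ideal J of R satisfies J = C(J) if and only if J is uniformly F-compatible, i.e., φ(F_*^e J) ⊆ J for all e > 0 and all R-linear φ : F_*^e R → R. Moreover, C(J) is the largest uniformly F-compatible ideal contained in J. -/
/-- J = C(J) iff J is uniformly F-compatible; C(J) is the largest uniformly
F-compatible ideal contained in J. -/
theorem cartierCore_compatible {R : Type*} [CommRing R] [IsNoetherianRing R] (p : ℕ)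
    [Fact p.Prime] [CharP R p] (hFF : FFinite R p) (hFP : IsFPure R p) (J : Ideal R) :
    (J = cartierCore p J ↔ UniformlyFCompatible p J) ∧
    UniformlyFCompatible p (cartierCore p J) ∧
    cartierCore p J ≤ J ∧
    (∀ K : Ideal R, UniformlyFCompatible p K → K ≤ J → K ≤ cartierCore p J) := by
  have hle : cartierCore p J ≤ J := by
    intro x hx
    obtain ⟨e, he, φ₀, hC, h1⟩ := hFP
    set ψ : R →+ R := φ₀.comp (AddMonoidHom.mulLeft (x ^ (p ^ e - 1))) with hψdef
    have hψ : IsCartierMap p e ψ := by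
      intro r s
      simp only [hψdef, AddMonoidHom.coe_comp, Function.comp_apply, AddMonoidHom.coe_mulLeft]
      rw [mul_left_comm, hC]
    have hxJ := hx e he ψ hψ
    have hpe : 1 ≤ p ^ e := Nat.one_le_pow _ _ (Fact.out (p := p.Prime)).pos
    have : ψ x = x := by
      simp only [hψdef, AddMonoidHom.coe_comp, Function.comp_apply, AddMonoidHom.coe_mulLeft]
      have h1' : x ^ (p ^ e - 1) * x = x ^ p ^ e * 1 := by
        rw [mul_one, ← pow_succ, Nat.sub_add_cancel hpe]
      rw [h1', hC, h1, mul_one]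
    rwa [this] at hxJ
  have hUFC : UniformlyFCompatible p (cartierCore p J) := by
    intro e he φ hφ x hx e' he' ψ hψ
    have hcomp : IsCartierMap p (e + e') (ψ.comp φ) := by
      intro r s
      simp only [AddMonoidHom.coe_comp, Function.comp_apply]
      have : r ^ p ^ (e + e') = (r ^ p ^ e') ^ p ^ e := by
        rw [← pow_mul, ← pow_add, Nat.add_comm]
      rw [this, hφ, hψ]
    exact hx (e + e') (Nat.add_pos_left he _) (ψ.comp φ) hcomp
  refine ⟨⟨fun h e he φ hφ x hx => ?_, fun h => le_antisymm (fun x hx e he φ hφ => h e he φ hφ x hx) hle⟩, hUFC, hle, fun K hK hKJ x hx e he φ hφ => hKJ (hK e he φ hφ x hx)⟩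
  rw [h] at hx
  exact hx e he φ hφ
end

section
/- Let k be a perfect field of characteristic p > 0, let R = k[x]/⟨x²⟩, and let J̄ be the zero ideal of R (image of ⟨x²⟩). Then for every e ≥ 1, the colon ideal ⟨x²⟩^{[p^e]} :_{k[x]} (⟨x²⟩^{[p^e]} :_{k[x]} ⟨x²⟩) equals ⟨x²⟩, and hence the Cartier core of the zero ideal of R equals the zero ideal, which is not a radical ideal of R. -/
open Polynomial

section Aux

variable {k : Type*} [Field k]

lemma aux_coeff_mul_one (f g : k[X]) :
    (f * g).coeff 1 = f.coeff 0 * g.coeff 1 + f.coeff 1 * g.coeff 0 := by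
  rw [coeff_mul, Finset.Nat.sum_antidiagonal_eq_sum_range_succ
    (fun i j => f.coeff i * g.coeff j)]
  simp [Finset.sum_range_succ]

lemma aux_colon_X_pow (m n : ℕ) (h : n ≤ m) :
    Submodule.colon (Ideal.span {(X : k[X]) ^ m}) (Ideal.span {(X : k[X]) ^ n}) =
      Ideal.span {(X : k[X]) ^ (m - n)} := by
  ext f
  rw [Ideal.mem_colon_span_singleton, Ideal.mem_span_singleton, Ideal.mem_span_singleton]
  have hx : (X : k[X]) ^ n ≠ 0 := pow_ne_zero _ X_ne_zero
  have hxm : (X : k[X]) ^ m = X ^ (m - n) * X ^ n := by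
    rw [← pow_add, Nat.sub_add_cancel h]
  constructor
  · intro hf
    rw [hxm] at hf
    exact (mul_dvd_mul_iff_right hx).mp hf
  · intro hf
    rw [hxm]
    exact mul_dvd_mul_right hf _

lemma aux_frobPow_X_sq (q : ℕ) :
    frobPow q (Ideal.span {(X : k[X]) ^ 2}) = Ideal.span {(X : k[X]) ^ (2 * q)} := by
  apply le_antisymm
  · rw [frobPow, Ideal.span_le]
    rintro _ ⟨f, hf, rfl⟩
    rw [SetLike.mem_coe, Ideal.mem_span_singleton] at hf
    obtain ⟨g, rfl⟩ := hf
    show (X ^ 2 * g) ^ q ∈ (Ideal.span {(X : k[X]) ^ (2 * q)} : Set k[X])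
    rw [SetLike.mem_coe, Ideal.mem_span_singleton]
    exact ⟨g ^ q, by rw [mul_pow, ← pow_mul]⟩
  · rw [Ideal.span_le, Set.singleton_subset_iff]
    have h2 : (X : k[X]) ^ (2 * q) = (X ^ 2) ^ q := by rw [pow_mul]
    rw [h2]
    exact Ideal.subset_span ⟨X ^ 2, Ideal.mem_span_singleton_self _, rfl⟩

variable (p : ℕ) [Fact p.Prime] [CharP k p] [PerfectField k]

/-- The additive map `k[X] → k[X]/(X²)` sending `f ↦ (coeff j f)^{1/p} · X` mod `X²`. -/
noncomputable def coeffRootMap (j : ℕ) :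
    k[X] →+ (k[X] ⧸ Ideal.span {(X : k[X]) ^ 2}) where
  toFun f := Ideal.Quotient.mk (Ideal.span {(X : k[X]) ^ 2})
    (C ((frobeniusEquiv k p).symm (f.coeff j)) * X)
  map_zero' := by simp
  map_add' f g := by
    rw [coeff_add, map_add, C_add, add_mul, map_add]

lemma coeffRootMap_vanish (j : ℕ) (hj : j < 2) (x : k[X])
    (hx : x ∈ Ideal.span {(X : k[X]) ^ 2}) : coeffRootMap p j x = 0 := by
  rw [Ideal.mem_span_singleton] at hx
  have h : x.coeff j = 0 := X_pow_dvd_iff.mp hx j hj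
  show Ideal.Quotient.mk (Ideal.span {(X : k[X]) ^ 2})
    (C ((frobeniusEquiv k p).symm (x.coeff j)) * X) = 0
  rw [h]
  simp

/-- The induced additive map on the quotient. -/
noncomputable def phiMap (j : ℕ) (hj : j < 2) :
    (k[X] ⧸ Ideal.span {(X : k[X]) ^ 2}) →+ (k[X] ⧸ Ideal.span {(X : k[X]) ^ 2}) :=
  QuotientAddGroup.lift (Ideal.span {(X : k[X]) ^ 2}).toAddSubgroup (coeffRootMap p j)
    (fun x hx => coeffRootMap_vanish p j hj x hx)

lemma phiMap_mk (j : ℕ) (hj : j < 2) (f : k[X]) :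
    phiMap p j hj (Ideal.Quotient.mk (Ideal.span {(X : k[X]) ^ 2}) f) =
      Ideal.Quotient.mk (Ideal.span {(X : k[X]) ^ 2})
        (C ((frobeniusEquiv k p).symm (f.coeff j)) * X) := rfl

lemma aux_coeff_one_pow_char (f : k[X]) : (f ^ p).coeff 1 = 0 := by
  have hp : p.Prime := Fact.out
  rw [← Polynomial.map_frobenius_expand, coeff_map, Polynomial.coeff_expand hp.pos,
    if_neg (fun h => by have := Nat.le_of_dvd one_pos h; have := hp.two_le; omega), map_zero]

lemma aux_coeff_zero_pow (f : k[X]) (n : ℕ) : (f ^ n).coeff 0 = f.coeff 0 ^ n := by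
  simpa only [constantCoeff_apply] using map_pow (constantCoeff : k[X] →+* k) f n

lemma aux_root_pow_mul (a b : k) :
    (frobeniusEquiv k p).symm (a ^ p * b) = a * (frobeniusEquiv k p).symm b := by
  rw [map_mul]
  congr 1
  have := frobeniusEquiv_symm_apply_frobenius k p a
  rwa [frobenius_def] at this

lemma phiMap_cartier (j : ℕ) (hj : j < 2) : IsCartierMap p 1 (phiMap (k := k) p j hj) := by
  intro r s
  obtain ⟨f, rfl⟩ := Ideal.Quotient.mk_surjective r
  obtain ⟨g, rfl⟩ := Ideal.Quotient.mk_surjective s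
  rw [pow_one, ← map_pow, ← map_mul, phiMap_mk, phiMap_mk, ← map_mul,
    Ideal.Quotient.eq, Ideal.mem_span_singleton, X_pow_dvd_iff]
  have key : (frobeniusEquiv k p).symm ((f ^ p * g).coeff j)
      = f.coeff 0 * (frobeniusEquiv k p).symm (g.coeff j) := by
    interval_cases j
    · rw [mul_coeff_zero, aux_coeff_zero_pow, aux_root_pow_mul]
    · rw [aux_coeff_mul_one, aux_coeff_one_pow_char, zero_mul, add_zero,
        aux_coeff_zero_pow, aux_root_pow_mul]
  intro d hd
  interval_cases d
  · rw [coeff_sub, mul_coeff_zero, mul_coeff_zero, mul_coeff_zero, coeff_X_zero,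
      mul_zero, mul_zero, mul_zero, sub_zero]
  · rw [coeff_sub, aux_coeff_mul_one, aux_coeff_mul_one f]
    simp [coeff_C_mul, key]

end Aux

/-- for R = k[x]/⟨x²⟩, the Cartier core of the zero ideal is the zero ideal,
which is not radical. -/
theorem nonreduced_example {k : Type*} [Field k] (p : ℕ) [Fact p.Prime] [CharP k p]
    [PerfectField k] :
    (∀ e : ℕ, 1 ≤ e →
        Submodule.colon (frobPow (p ^ e) (Ideal.span {(Polynomial.X : Polynomial k) ^ 2}))
          (Submodule.colon (frobPow (p ^ e) (Ideal.span {(Polynomial.X : Polynomial k) ^ 2}))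
            (Ideal.span {(Polynomial.X : Polynomial k) ^ 2})) =
        Ideal.span {(Polynomial.X : Polynomial k) ^ 2}) ∧
    cartierCore p (⊥ : Ideal (Polynomial k ⧸ Ideal.span {(Polynomial.X : Polynomial k) ^ 2})) =
      ⊥ ∧
    (⊥ : Ideal (Polynomial k ⧸ Ideal.span {(Polynomial.X : Polynomial k) ^ 2})).radical ≠ ⊥ := by
  have hp : p.Prime := Fact.out
  refine ⟨?_, ?_, ?_⟩
  · intro e he
    have hq : 2 ≤ p ^ e := le_trans hp.two_le (Nat.le_self_pow (by omega) p)
    rw [aux_frobPow_X_sq, show ((Ideal.span {(X : k[X]) ^ 2}) : Ideal k[X])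
        = Ideal.span {(X : k[X]) ^ 2} from rfl,
      aux_colon_X_pow (2 * p ^ e) 2 (by omega),
      aux_colon_X_pow (2 * p ^ e) (2 * p ^ e - 2) (by omega),
      show 2 * p ^ e - (2 * p ^ e - 2) = 2 by omega]
  · apply le_antisymm
    · intro r hr
      obtain ⟨f, rfl⟩ := Ideal.Quotient.mk_surjective r
      have h0 := hr 1 one_pos (phiMap (k := k) p 0 (by omega)) (phiMap_cartier (k := k) p 0 (by omega))
      have h1 := hr 1 one_pos (phiMap (k := k) p 1 (by omega)) (phiMap_cartier (k := k) p 1 (by omega))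
      rw [phiMap_mk, Ideal.mem_bot, Ideal.Quotient.eq_zero_iff_mem,
        Ideal.mem_span_singleton, X_pow_dvd_iff] at h0 h1
      have key : ∀ a : k, (∀ d < 2, (C ((frobeniusEquiv k p).symm a) * X).coeff d = 0) →
          a = 0 := by
        intro a ha
        have := ha 1 (by omega)
        rw [coeff_C_mul, coeff_X_one, mul_one] at this
        have := congrArg (frobenius k p) this
        rwa [frobenius_apply_frobeniusEquiv_symm, map_zero] at this
      have c0 := key _ h0
      have c1 := key _ h1
      rw [Ideal.mem_bot, Ideal.Quotient.eq_zero_iff_mem, Ideal.mem_span_singleton,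
        X_pow_dvd_iff]
      intro d hd
      interval_cases d
      · exact c0
      · exact c1
    · exact bot_le
  · intro hcon
    have hX : (Ideal.Quotient.mk (Ideal.span {(X : k[X]) ^ 2}) X) ∈
        (⊥ : Ideal (k[X] ⧸ Ideal.span {(X : k[X]) ^ 2})).radical := by
      refine ⟨2, ?_⟩
      rw [← map_pow, Ideal.mem_bot, Ideal.Quotient.eq_zero_iff_mem]
      exact Ideal.mem_span_singleton_self _
    rw [hcon, Ideal.mem_bot, Ideal.Quotient.eq_zero_iff_mem, Ideal.mem_span_singleton] at hX
    have h1 := X_pow_dvd_iff.mp hX 1 (by omega)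
    simp at h1
end

section
/- Let S = k[x₁,…,x_d] be a polynomial ring over a perfect field k of characteristic p, let I be a squarefree monomial ideal, and let P₁,…,P_t be the minimal primes of I (each generated by a subset of the variables). Then the largest proper uniformly F-compatible ideal of R = S/I, equivalently the Cartier core of the homogeneous maximal ideal of R, equals (P₁ + ⋯ + P_t)/I, the sum of the minimal primes of R. -/
set_option linter.unusedSectionVars false
set_option synthInstance.maxHeartbeats 1000000
set_option maxHeartbeats 1000000
open MvPolynomial

noncomputable section
variable {k : Type*} [Field k] {p : ℕ} [Fact p.Prime] [CharP k p] [PerfectField k] {d : ℕ}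

def invFrob (k : Type*) [Field k] (p : ℕ) [Fact p.Prime] [CharP k p] [PerfectField k]
    (e : ℕ) : k →+* k := ((iterateFrobeniusEquiv k p e).symm : k ≃+* k)

lemma invFrob_pow (e : ℕ) (c : k) : invFrob k p e (c ^ p ^ e) = c := by
  have : c ^ p ^ e = iterateFrobeniusEquiv k p e c := rfl
  rw [invFrob, this]
  exact (iterateFrobeniusEquiv k p e).symm_apply_apply c

lemma invFrob_mul_pow (e : ℕ) (c c' : k) :
    invFrob k p e (c ^ p ^ e * c') = c * invFrob k p e c' := by
  rw [map_mul, invFrob_pow]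

lemma invFrob_eq_zero_iff (e : ℕ) (c : k) : invFrob k p e c = 0 ↔ c = 0 := by
  rw [invFrob]
  exact map_eq_zero _

lemma smul_add_inj (q : ℕ) (hq : 0 < q) (a : Fin d →₀ ℕ) :
    Function.Injective (fun b : Fin d →₀ ℕ => q • b + a) := by
  intro b₁ b₂ h
  ext i
  have := congrArg (fun f : Fin d →₀ ℕ => f i) h
  simp only [Finsupp.add_apply, Finsupp.smul_apply, smul_eq_mul] at this
  exact Nat.eq_of_mul_eq_mul_left hq (by omega)

variable (k p) in
def cartFun (e : ℕ) (a : Fin d →₀ ℕ) (f : MvPolynomial (Fin d) k) : MvPolynomial (Fin d) k :=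
  AddMonoidAlgebra.ofCoeff (Finsupp.mapRange (invFrob k p e) (map_zero _)
    (Finsupp.comapDomain (fun b : Fin d →₀ ℕ => p ^ e • b + a) (AddMonoidAlgebra.coeff f)
      (smul_add_inj _ (pow_pos (Fact.out (p := p.Prime)).pos e) a).injOn))

lemma coeff_cartFun (e : ℕ) (a b : Fin d →₀ ℕ) (f : MvPolynomial (Fin d) k) :
    coeff b (cartFun k p e a f) = invFrob k p e (coeff (p ^ e • b + a) f) := rfl

variable (k p) in
def cartMap (e : ℕ) (a : Fin d →₀ ℕ) :
    MvPolynomial (Fin d) k →+ MvPolynomial (Fin d) k where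
  toFun := cartFun k p e a
  map_zero' := by
    apply MvPolynomial.ext; intro m
    rw [coeff_cartFun, coeff_zero, map_zero, coeff_zero]
  map_add' f g := by
    apply MvPolynomial.ext; intro m
    rw [coeff_cartFun, coeff_add, coeff_add, coeff_cartFun, coeff_cartFun, map_add]

lemma cartMap_apply (e : ℕ) (a b : Fin d →₀ ℕ) (f : MvPolynomial (Fin d) k) :
    coeff b (cartMap k p e a f) = invFrob k p e (coeff (p ^ e • b + a) f) := rfl

lemma cartMap_monomial_pow_mul (e : ℕ) (a : Fin d →₀ ℕ) (ha : ∀ i, a i < p ^ e)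
    (m' : Fin d →₀ ℕ) (c' : k) (s : MvPolynomial (Fin d) k) :
    cartMap k p e a ((monomial m' c') ^ p ^ e * s) = monomial m' c' * cartMap k p e a s := by
  have hq : 0 < p ^ e := pow_pos (Fact.out (p := p.Prime)).pos e
  apply MvPolynomial.ext; intro b
  rw [cartMap_apply, monomial_pow, coeff_monomial_mul', coeff_monomial_mul', cartMap_apply]
  by_cases h : m' ≤ b
  · have h1 : p ^ e • m' ≤ p ^ e • b + a := by
      rw [Finsupp.le_def]; intro i
      simp only [Finsupp.smul_apply, Finsupp.add_apply, smul_eq_mul]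
      exact le_trans (Nat.mul_le_mul_left _ (h i)) (Nat.le_add_right _ _)
    have h2 : p ^ e • b + a - p ^ e • m' = p ^ e • (b - m') + a := by
      have h3 : p ^ e • m' + (p ^ e • (b - m') + a) = p ^ e • b + a := by
        rw [← add_assoc, ← smul_add, add_tsub_cancel_of_le h]
      rw [← h3, add_tsub_cancel_left]
    rw [if_pos h, if_pos h1, h2, invFrob_mul_pow]
  · have h1 : ¬ p ^ e • m' ≤ p ^ e • b + a := by
      intro hle
      obtain ⟨i, hi⟩ : ∃ i, ¬ m' i ≤ b i := by
        by_contra hc; push_neg at hc; exact h fun i => hc i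
      have := hle i
      simp only [Finsupp.smul_apply, Finsupp.add_apply, smul_eq_mul] at this
      have key := Nat.mul_le_mul_left (p ^ e) (Nat.succ_le_of_lt (Nat.lt_of_not_le hi))
      rw [Nat.mul_succ] at key
      have hia := ha i
      clear h hle hi
      linarith
    rw [if_neg h, if_neg h1, map_zero]

lemma cartMap_isCartier (e : ℕ) (a : Fin d →₀ ℕ) (ha : ∀ i, a i < p ^ e) :
    IsCartierMap p e (cartMap k p e a) := by
  intro r s
  conv_lhs => rw [show r = ∑ v ∈ r.support, monomial v (coeff v r) from r.as_sum]
  conv_rhs => rw [show r = ∑ v ∈ r.support, monomial v (coeff v r) from r.as_sum]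
  rw [sum_pow_char_pow, Finset.sum_mul, map_sum, Finset.sum_mul]
  exact Finset.sum_congr rfl fun v _ => cartMap_monomial_pow_mul e a ha v _ s

variable (k) in
def PP (σ : Finset (Fin d)) : Ideal (MvPolynomial (Fin d) k) :=
  Ideal.span ((fun i => (X i : MvPolynomial (Fin d) k)) '' ↑σ)

lemma mem_PP_iff (σ : Finset (Fin d)) (f : MvPolynomial (Fin d) k) :
    f ∈ PP k σ ↔ ∀ m ∈ f.support, ∃ i ∈ σ, m i ≠ 0 := by
  rw [PP, show ((fun i => (X i : MvPolynomial (Fin d) k)) '' ↑σ)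
      = X '' (↑σ : Set (Fin d)) from rfl, mem_ideal_span_X_image]
  simp

lemma monomial_mem_PP_iff (σ : Finset (Fin d)) (m : Fin d →₀ ℕ) (c : k) (hc : c ≠ 0) :
    monomial m c ∈ PP k σ ↔ ∃ i ∈ σ, m i ≠ 0 := by
  classical
  rw [mem_PP_iff, support_monomial, if_neg hc]
  simp

variable (k) in
def killHom (σ : Finset (Fin d)) : MvPolynomial (Fin d) k →+* MvPolynomial (Fin d) k :=
  (aeval (fun i => if i ∈ σ then 0 else X i)).toRingHom

lemma killHom_monomial (σ : Finset (Fin d)) (m : Fin d →₀ ℕ) (c : k) :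
    killHom k σ (monomial m c) =
      if ∀ i ∈ σ, m i = 0 then monomial m c else 0 := by
  rw [killHom, AlgHom.toRingHom_eq_coe, RingHom.coe_coe, aeval_monomial]
  by_cases h : ∀ i ∈ σ, m i = 0
  · rw [if_pos h]
    rw [monomial_eq]
    congr 1
    apply Finsupp.prod_congr
    intro i hi
    have : i ∉ σ := fun hiσ => (Finsupp.mem_support_iff.mp hi) (h i hiσ)
    rw [if_neg this]
  · rw [if_neg h]
    push_neg at h
    obtain ⟨i, hiσ, hmi⟩ := h
    have hi : i ∈ m.support := Finsupp.mem_support_iff.mpr hmi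
    rw [Finsupp.prod, Finset.prod_eq_zero hi (by rw [if_pos hiσ, zero_pow hmi]), mul_zero]

lemma coeff_killHom (σ : Finset (Fin d)) (f : MvPolynomial (Fin d) k)
    (b : Fin d →₀ ℕ) (hb : ∀ i ∈ σ, b i = 0) :
    coeff b (killHom k σ f) = coeff b f := by
  conv_lhs => rw [f.as_sum]
  rw [map_sum, coeff_sum]
  conv_rhs => rw [f.as_sum, coeff_sum]
  apply Finset.sum_congr rfl
  intro m _
  rw [killHom_monomial]
  by_cases h : ∀ i ∈ σ, m i = 0
  · rw [if_pos h]
  · rw [if_neg h, coeff_zero, coeff_monomial]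
    have : m ≠ b := by
      intro hmb; subst hmb; exact h hb
    rw [if_neg this]

lemma mem_PP_iff_killHom (σ : Finset (Fin d)) (f : MvPolynomial (Fin d) k) :
    f ∈ PP k σ ↔ killHom k σ f = 0 := by
  constructor
  · intro hf
    have hle : PP k σ ≤ RingHom.ker (killHom k σ) := by
      rw [PP, Ideal.span_le]
      rintro - ⟨i, hi, rfl⟩
      simp only [SetLike.mem_coe, RingHom.mem_ker]
      rw [killHom, AlgHom.toRingHom_eq_coe, RingHom.coe_coe, aeval_X, if_pos (Finset.mem_coe.mp hi)]
    exact hle hf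
  · intro hf
    rw [mem_PP_iff]
    intro m hm
    by_contra hc
    push_neg at hc
    have : coeff m (killHom k σ f) = coeff m f := coeff_killHom σ f m hc
    rw [hf, coeff_zero] at this
    exact Finsupp.mem_support_iff.mp hm this.symm

lemma PP_isPrime (σ : Finset (Fin d)) : (PP k σ).IsPrime := by
  constructor
  · intro h
    have : (1 : MvPolynomial (Fin d) k) ∈ PP k σ := h ▸ Submodule.mem_top
    rw [mem_PP_iff_killHom, map_one] at this
    exact one_ne_zero this
  · intro f g hfg
    rw [mem_PP_iff_killHom, map_mul] at hfg
    rcases mul_eq_zero.mp hfg with h | h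
    · exact Or.inl ((mem_PP_iff_killHom σ f).mpr h)
    · exact Or.inr ((mem_PP_iff_killHom σ g).mpr h)

section Main
lemma ccApply (σ : Finset (Fin d)) (j : Fin d) :
    (∑ j' ∈ σᶜ, Finsupp.single j' (1:ℕ)) j = if j ∈ σ then 0 else 1 := by
  classical
  rw [Finsupp.finset_sum_apply]
  simp only [Finsupp.single_apply]
  rw [Finset.sum_ite_eq' σᶜ j (fun _ => 1)]
  by_cases h : j ∈ σ
  · rw [if_neg (by simpa using h), if_pos h]
  · rw [if_pos (by simpa using h), if_neg h]

lemma X_mem_PP_iff (σ : Finset (Fin d)) (i : Fin d) :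
    (X i : MvPolynomial (Fin d) k) ∈ PP k σ ↔ i ∈ σ := by
  constructor
  · intro h
    rw [mem_PP_iff] at h
    obtain ⟨j, hj, hji⟩ := h (Finsupp.single i 1) (by rw [support_X]; simp)
    rcases eq_or_ne i j with rfl | hij
    · exact hj
    · exact absurd (Finsupp.single_eq_of_ne' hij) hji
  · intro h
    exact Ideal.subset_span ⟨i, Finset.mem_coe.mpr h, rfl⟩

variable {T : Finset (Finset (Fin d))} {I : Ideal (MvPolynomial (Fin d) k)}
  (hI : I = ⨅ σ ∈ T, PP k σ)
include hI

lemma mem_I_iff (f : MvPolynomial (Fin d) k) : f ∈ I ↔ ∀ σ ∈ T, f ∈ PP k σ := by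
  rw [hI]
  simp [Submodule.mem_iInf]

lemma I_le_PP {σ : Finset (Fin d)} (hσ : σ ∈ T) : I ≤ PP k σ := by
  intro f hf
  exact (mem_I_iff hI f).mp hf σ hσ

lemma minimalPrime_eq (Q : Ideal (MvPolynomial (Fin d) k)) (hQ : Q ∈ I.minimalPrimes) :
    ∃ σ ∈ T, Q = PP k σ := by
  obtain ⟨⟨hQp, hIQ⟩, hmin⟩ := hQ
  have hinf : T.inf (fun σ => PP k σ) ≤ Q := by
    rw [Finset.inf_eq_iInf]
    exact le_trans (le_of_eq hI.symm) hIQ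
  obtain ⟨σ, hσT, hle⟩ := (Ideal.IsPrime.inf_le' hQp).mp hinf
  refine ⟨σ, hσT, le_antisymm ?_ hle⟩
  exact hmin ⟨PP_isPrime σ, I_le_PP hI hσT⟩ hle

lemma exists_minimal_sub {σ : Finset (Fin d)} (hσ : σ ∈ T) :
    ∃ σ₀ ∈ T, σ₀ ⊆ σ ∧ PP k σ₀ ∈ I.minimalPrimes := by
  have : (PP k σ).IsPrime := PP_isPrime σ
  obtain ⟨Q, hQmin, hQle⟩ := Ideal.exists_minimalPrimes_le (I_le_PP hI hσ)
  obtain ⟨σ₀, hσ₀T, rfl⟩ := minimalPrime_eq hI Q hQmin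
  refine ⟨σ₀, hσ₀T, ?_, hQmin⟩
  intro i hi
  have : (X i : MvPolynomial (Fin d) k) ∈ PP k σ :=
    hQle ((X_mem_PP_iff σ₀ i).mpr hi)
  exact (X_mem_PP_iff σ i).mp this

/-- descent of `cartMap` through the quotient -/
lemma cartMap_mem_I (e : ℕ) (a : Fin d →₀ ℕ)
    (ha : ∀ σ₀, PP k σ₀ ∈ I.minimalPrimes → ∀ i ∈ σ₀, a i = 0)
    {f : MvPolynomial (Fin d) k} (hf : f ∈ I) : cartMap k p e a f ∈ I := by
  rw [mem_I_iff hI]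
  intro σ hσ
  obtain ⟨σ₀, hσ₀T, hsub, hσ₀min⟩ := exists_minimal_sub hI hσ
  have hfσ₀ : f ∈ PP k σ₀ := (mem_I_iff hI f).mp hf σ₀ hσ₀T
  rw [mem_PP_iff] at hfσ₀ ⊢
  intro b hb
  have hcoeff : coeff (p ^ e • b + a) f ≠ 0 := by
    intro h0
    have : coeff b (cartMap k p e a f) = 0 := by
      rw [cartMap_apply, h0, map_zero]
    exact Finsupp.mem_support_iff.mp hb this
  obtain ⟨i, hiσ₀, hine⟩ := hfσ₀ _ (Finsupp.mem_support_iff.mpr hcoeff)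
  refine ⟨i, hsub hiσ₀, ?_⟩
  have hai : a i = 0 := ha σ₀ hσ₀min i hiσ₀
  intro hbi
  apply hine
  simp [Finsupp.add_apply, Finsupp.smul_apply, hai, hbi]

lemma key_extract (x : MvPolynomial (Fin d) k)
    (hx : x ∉ (sSup I.minimalPrimes) ⊔ I) :
    ∃ e, 0 < e ∧ ∃ a : Fin d →₀ ℕ, (∀ i, a i < p ^ e) ∧
      (∀ σ₀, PP k σ₀ ∈ I.minimalPrimes → ∀ i ∈ σ₀, a i = 0) ∧
      ∃ u : k, u ≠ 0 ∧ cartMap k p e a x = C u := by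
  have hmono : ∃ a ∈ x.support,
      monomial a (coeff a x) ∉ (sSup I.minimalPrimes) ⊔ I := by
    by_contra h
    push_neg at h
    apply hx
    rw [x.as_sum]
    exact Submodule.sum_mem _ fun m hm => h m hm
  obtain ⟨a, haSupp, haMem⟩ := hmono
  have hca : coeff a x ≠ 0 := Finsupp.mem_support_iff.mp haSupp
  have ha0 : ∀ σ₀, PP k σ₀ ∈ I.minimalPrimes → ∀ i ∈ σ₀, a i = 0 := by
    intro σ₀ hσ₀ i hi
    by_contra hai
    apply haMem
    apply Submodule.mem_sup_left
    apply le_sSup hσ₀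
    exact (monomial_mem_PP_iff σ₀ a (coeff a x) hca).mpr ⟨i, hi, hai⟩
  set N := x.totalDegree with hN
  set e := N + 1 with he
  have hpe : N < p ^ e := by
    calc N < p ^ N := Nat.lt_pow_self (n := N) (Fact.out (p := p.Prime)).one_lt
    _ ≤ p ^ e := Nat.pow_le_pow_right (Fact.out (p := p.Prime)).pos (by omega)
  have hbound : ∀ m ∈ x.support, ∀ i, m i < p ^ e := by
    intro m hm i
    have h1 : m i ≤ (m.sum fun _ n => n) := by
      by_cases h : m i = 0
      · omega
      · exact Finset.single_le_sum (f := fun j => m j) (fun _ _ => Nat.zero_le _)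
          (Finsupp.mem_support_iff.mpr h)
    exact lt_of_le_of_lt (le_trans h1 (le_totalDegree hm)) hpe
  refine ⟨e, by omega, a, fun i => hbound a haSupp i, ha0,
    invFrob k p e (coeff a x), ?_, ?_⟩
  · rw [Ne, invFrob_eq_zero_iff]; exact hca
  · apply MvPolynomial.ext
    intro b
    rw [cartMap_apply]
    rcases eq_or_ne b 0 with rfl | hb
    · rw [smul_zero, zero_add]
      rw [show coeff (0 : Fin d →₀ ℕ) (C (invFrob k p e (coeff a x)))
        = invFrob k p e (coeff a x) from coeff_zero_C _]
    · obtain ⟨i, hbi⟩ : ∃ i, b i ≠ 0 := by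
        by_contra hc; push_neg at hc
        exact hb (Finsupp.ext fun i => hc i)
      have hzero : coeff (p ^ e • b + a) x = 0 := by
        by_contra hnz
        have := hbound _ (Finsupp.mem_support_iff.mpr hnz) i
        simp only [Finsupp.add_apply, Finsupp.smul_apply, smul_eq_mul] at this
        have hq1 : p ^ e ≤ p ^ e * b i := Nat.le_mul_of_pos_right _ (Nat.pos_of_ne_zero hbi)
        omega
      rw [hzero, map_zero, coeff_C, if_neg (by exact fun h => hb h.symm)]

lemma comp_mul_mem_I {σ : Finset (Fin d)} (hσmin : PP k σ ∈ I.minimalPrimes)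
    {y : MvPolynomial (Fin d) k} (hy : y ∈ PP k σ) :
    (monomial (∑ j' ∈ σᶜ, Finsupp.single j' (1:ℕ)) (1:k)) * y ∈ I := by
  rw [mem_I_iff hI]
  intro τ hτ
  rw [mem_PP_iff]
  intro b hb
  have hcb := MvPolynomial.mem_support_iff.mp hb
  rw [coeff_monomial_mul'] at hcb
  by_cases hle : (∑ j' ∈ σᶜ, Finsupp.single j' (1:ℕ)) ≤ b
  swap
  · rw [if_neg hle] at hcb; exact absurd rfl hcb
  rw [if_pos hle, one_mul] at hcb
  by_cases hsub : τ ⊆ σ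
  · have hPle : PP k τ ≤ PP k σ := by
      rw [PP, PP]
      apply Ideal.span_mono
      apply Set.image_mono
      exact_mod_cast hsub
    have hPge : PP k σ ≤ PP k τ := hσmin.2 ⟨PP_isPrime τ, I_le_PP hI hτ⟩ hPle
    obtain ⟨i, hiτ, hine⟩ := (mem_PP_iff τ _).mp (hPge hy) _ (Finsupp.mem_support_iff.mpr hcb)
    refine ⟨i, hiτ, ?_⟩
    rw [Finsupp.tsub_apply] at hine
    omega
  · obtain ⟨j, hjτ, hjσ⟩ := Finset.not_subset.mp hsub
    refine ⟨j, hjτ, ?_⟩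
    have := hle j
    rw [ccApply, if_neg hjσ] at this
    omega

lemma compat_minPrime (Q : Ideal (MvPolynomial (Fin d) k)) (hQ : Q ∈ I.minimalPrimes)
    (e : ℕ) (φ : (MvPolynomial (Fin d) k ⧸ I) →+ (MvPolynomial (Fin d) k ⧸ I))
    (hφ : IsCartierMap p e φ) :
    ∀ z ∈ Q.map (Ideal.Quotient.mk I), φ z ∈ Q.map (Ideal.Quotient.mk I) := by
  obtain ⟨σ, hσT, rfl⟩ := minimalPrime_eq hI Q hQ
  intro z hz
  obtain ⟨y, hy, rfl⟩ :=
    (Ideal.mem_map_iff_of_surjective _ Ideal.Quotient.mk_surjective).mp hz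
  set c : MvPolynomial (Fin d) k :=
    monomial (∑ j' ∈ σᶜ, Finsupp.single j' (1:ℕ)) (1:k) with hc
  have hne : (Ideal.Quotient.mk I c) ∉ (PP k σ).map (Ideal.Quotient.mk I) := by
    rw [Ideal.mem_quotient_iff_mem_sup, sup_eq_left.mpr (I_le_PP hI hσT), hc,
      monomial_mem_PP_iff _ _ _ one_ne_zero]
    rintro ⟨i, hiσ, hcci⟩
    rw [ccApply, if_pos hiσ] at hcci
    exact hcci rfl
  haveI : (PP k σ).IsPrime := PP_isPrime σ
  have hprime : ((PP k σ).map (Ideal.Quotient.mk I)).IsPrime :=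
    Ideal.map_isPrime_of_surjective Ideal.Quotient.mk_surjective
      (by rw [Ideal.mk_ker]; exact hQ.1.2)
  have hq0 : p ^ e ≠ 0 := pow_ne_zero e (Fact.out (p := p.Prime)).ne_zero
  have hc0 : (Ideal.Quotient.mk I c) * φ (Ideal.Quotient.mk I y) = 0 := by
    have h1 : (Ideal.Quotient.mk I c) ^ p ^ e * (Ideal.Quotient.mk I y) = 0 := by
      rw [← map_pow, ← map_mul, Ideal.Quotient.eq_zero_iff_mem]
      have h2 : c ^ p ^ e * y = c ^ (p ^ e - 1) * (c * y) := by
        rw [← mul_assoc, pow_sub_one_mul hq0]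
      rw [h2]
      exact Ideal.mul_mem_left _ _ (comp_mul_mem_I hI hQ hy)
    rw [← hφ (Ideal.Quotient.mk I c) (Ideal.Quotient.mk I y), h1, map_zero]
  have : (Ideal.Quotient.mk I c) * φ (Ideal.Quotient.mk I y)
      ∈ (PP k σ).map (Ideal.Quotient.mk I) := by
    rw [hc0]; exact zero_mem _
  rcases hprime.mem_or_mem this with h | h
  · exact absurd h hne
  · exact h

end Main

end

section
variable {S : Type*} [CommRing S] (I : Ideal S)

def quotLift (Ψ : S →+ S) (h : ∀ x ∈ I, Ψ x ∈ I) : (S ⧸ I) →+ (S ⧸ I) where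
  toFun x := Quotient.liftOn' x (fun s => Ideal.Quotient.mk I (Ψ s)) (by
    intro s t hst
    have hst' : s - t ∈ I := (Submodule.quotientRel_def _).mp hst
    rw [Ideal.Quotient.eq]
    simpa [map_sub] using h _ hst')
  map_zero' := by
    show Ideal.Quotient.mk I (Ψ 0) = 0
    rw [map_zero, map_zero]
  map_add' x y := by
    obtain ⟨x, rfl⟩ := Ideal.Quotient.mk_surjective x
    obtain ⟨y, rfl⟩ := Ideal.Quotient.mk_surjective y
    rw [← map_add]
    show Ideal.Quotient.mk I (Ψ (x + y)) =
      Ideal.Quotient.mk I (Ψ x) + Ideal.Quotient.mk I (Ψ y)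
    rw [map_add, map_add]

lemma quotLift_mk (Ψ : S →+ S) (h : ∀ x ∈ I, Ψ x ∈ I) (s : S) :
    quotLift I Ψ h (Ideal.Quotient.mk I s) = Ideal.Quotient.mk I (Ψ s) := rfl
end
section
variable {S : Type*} [CommRing S] (I : Ideal S)
lemma quotLift_isCartier (p e : ℕ) (Ψ : S →+ S) (h : ∀ x ∈ I, Ψ x ∈ I)
    (hΨ : IsCartierMap p e Ψ) : IsCartierMap p e (quotLift I Ψ h) := by
  intro r s
  obtain ⟨r, rfl⟩ := Ideal.Quotient.mk_surjective r
  obtain ⟨s, rfl⟩ := Ideal.Quotient.mk_surjective s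
  rw [← map_pow, ← map_mul, quotLift_mk, quotLift_mk, hΨ, map_mul]
end

/-- for a Stanley-Reisner ring R = S/I over a perfect field, the Cartier core
of the homogeneous maximal ideal (= the largest proper uniformly F-compatible ideal) is the
sum of the minimal primes. -/
theorem stanleyReisner_splitting_prime {k : Type*} [Field k] (p d : ℕ) [Fact p.Prime]
    [CharP k p] [PerfectField k] (T : Finset (Finset (Fin d))) (hT : T.Nonempty)
    (I : Ideal (MvPolynomial (Fin d) k))
    (hI : I = ⨅ σ ∈ T,
      Ideal.span ((fun i => (MvPolynomial.X i : MvPolynomial (Fin d) k)) '' ↑σ)) :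
    cartierCore p
        ((Ideal.span (Set.range (MvPolynomial.X : Fin d → MvPolynomial (Fin d) k))).map
          (Ideal.Quotient.mk I)) =
      (sSup I.minimalPrimes).map (Ideal.Quotient.mk I) ∧
    UniformlyFCompatible p ((sSup I.minimalPrimes).map (Ideal.Quotient.mk I)) ∧
    (sSup I.minimalPrimes).map (Ideal.Quotient.mk I) ≠ ⊤ ∧
    (∀ K : Ideal (MvPolynomial (Fin d) k ⧸ I), UniformlyFCompatible p K → K ≠ ⊤ →
      K ≤ (sSup I.minimalPrimes).map (Ideal.Quotient.mk I)) := by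
  classical
  have hI' : I = ⨅ σ ∈ T, PP k σ := by simpa [PP] using hI
  have hspan : Ideal.span (Set.range (MvPolynomial.X : Fin d → MvPolynomial (Fin d) k))
      = PP k Finset.univ := by
    rw [PP]
    congr 1
    rw [Finset.coe_univ, Set.image_univ]
  have hMle : sSup I.minimalPrimes ≤ PP k Finset.univ := by
    apply sSup_le
    intro Q hQ
    obtain ⟨σ, hσT, rfl⟩ := minimalPrime_eq hI' Q hQ
    rw [PP, PP]
    apply Ideal.span_mono
    apply Set.image_mono
    intro i _
    simp
  have hIle : I ≤ PP k Finset.univ := by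
    obtain ⟨σ, hσ⟩ := hT
    refine le_trans (I_le_PP hI' hσ) ?_
    rw [PP, PP]
    apply Ideal.span_mono
    apply Set.image_mono
    intro i _
    simp
  have hPPuniv_ne : ∀ u : k, u ≠ 0 → (C u : MvPolynomial (Fin d) k) ∉ PP k Finset.univ := by
    intro u hu hmem
    rw [show (C u : MvPolynomial (Fin d) k) = monomial 0 u from rfl,
      monomial_mem_PP_iff _ _ _ hu] at hmem
    obtain ⟨i, _, h0⟩ := hmem
    exact h0 rfl
  have hcompat : UniformlyFCompatible p
      ((sSup I.minimalPrimes).map (Ideal.Quotient.mk I)) := by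
    intro e he φ hφ x hx
    have hmap : (sSup I.minimalPrimes).map (Ideal.Quotient.mk I)
        = ⨆ Q : I.minimalPrimes, ((Q : Ideal (MvPolynomial (Fin d) k)).map (Ideal.Quotient.mk I)) := by
      rw [sSup_eq_iSup', Ideal.map_iSup]
    rw [hmap] at hx ⊢
    refine Submodule.iSup_induction
      (motive := fun z => φ z ∈ ⨆ Q : I.minimalPrimes,
        ((Q : Ideal (MvPolynomial (Fin d) k)).map (Ideal.Quotient.mk I))) _ hx ?_ ?_ ?_
    · intro Q y hy
      have hmem := compat_minPrime hI' Q Q.2 e φ hφ y hy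
      exact le_iSup (fun Q : I.minimalPrimes =>
        ((Q : Ideal (MvPolynomial (Fin d) k)).map (Ideal.Quotient.mk I))) Q hmem
    · show φ 0 ∈ _
      rw [map_zero]
      exact zero_mem _
    · intro a b ha hb
      show φ (a + b) ∈ _
      rw [map_add]
      exact add_mem ha hb
  have hJtop : (sSup I.minimalPrimes).map (Ideal.Quotient.mk I) ≠ ⊤ := by
    intro h
    have h1 : Ideal.Quotient.mk I (1 : MvPolynomial (Fin d) k)
        ∈ (sSup I.minimalPrimes).map (Ideal.Quotient.mk I) := by
      rw [h]; exact Submodule.mem_top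
    have h2 : (1 : MvPolynomial (Fin d) k) ∈ sSup I.minimalPrimes ⊔ I :=
      Ideal.mem_quotient_iff_mem_sup.mp h1
    have h3 : (1 : MvPolynomial (Fin d) k) ∈ PP k Finset.univ := (sup_le hMle hIle) h2
    exact hPPuniv_ne 1 one_ne_zero (by rwa [C_1])
  have hkey : ∀ z : MvPolynomial (Fin d) k ⧸ I,
      z ∉ (sSup I.minimalPrimes).map (Ideal.Quotient.mk I) →
      ∃ e, 0 < e ∧ ∃ φ : (MvPolynomial (Fin d) k ⧸ I) →+ (MvPolynomial (Fin d) k ⧸ I),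
        IsCartierMap p e φ ∧ ∃ u : k, u ≠ 0 ∧ φ z = Ideal.Quotient.mk I (C u) := by
    intro z hz
    obtain ⟨x, rfl⟩ := Ideal.Quotient.mk_surjective z
    have hxM : x ∉ (sSup I.minimalPrimes) ⊔ I :=
      fun h => hz (Ideal.mem_quotient_iff_mem_sup.mpr h)
    obtain ⟨e, he, a, hae, ha0, u, hu, hcart⟩ := key_extract (p := p) hI' x hxM
    refine ⟨e, he,
      quotLift I (cartMap k p e a) (fun w hw => cartMap_mem_I hI' e a ha0 hw),
      quotLift_isCartier I p e _ _ (cartMap_isCartier e a hae), u, hu, ?_⟩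
    rw [quotLift_mk, hcart]
  have hmax : ∀ K : Ideal (MvPolynomial (Fin d) k ⧸ I), UniformlyFCompatible p K → K ≠ ⊤ →
      K ≤ (sSup I.minimalPrimes).map (Ideal.Quotient.mk I) := by
    intro K hK hKtop z hzK
    by_contra hzJ
    obtain ⟨e, he, φ, hφ, u, hu, hφz⟩ := hkey z hzJ
    have h1 : Ideal.Quotient.mk I (C u) ∈ K := hφz ▸ hK e he φ hφ z hzK
    have h2 := K.mul_mem_left (Ideal.Quotient.mk I (C u⁻¹)) h1
    have h3 : (Ideal.Quotient.mk I (C u⁻¹)) * (Ideal.Quotient.mk I (C u)) = 1 := by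
      rw [← map_mul, ← C_mul, inv_mul_cancel₀ hu, C_1, map_one]
    rw [h3] at h2
    exact hKtop ((Ideal.eq_top_iff_one K).mpr h2)
  refine ⟨le_antisymm ?_ ?_, hcompat, hJtop, hmax⟩
  · intro z hz
    by_contra hzJ
    obtain ⟨e, he, φ, hφ, u, hu, hφz⟩ := hkey z hzJ
    have hmem : φ z ∈ (Ideal.span (Set.range
        (MvPolynomial.X : Fin d → MvPolynomial (Fin d) k))).map (Ideal.Quotient.mk I) :=
      hz e he φ hφ
    rw [hφz] at hmem
    have h2 : (C u : MvPolynomial (Fin d) k)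
        ∈ Ideal.span (Set.range (MvPolynomial.X : Fin d → MvPolynomial (Fin d) k)) ⊔ I :=
      Ideal.mem_quotient_iff_mem_sup.mp hmem
    rw [hspan] at h2
    exact hPPuniv_ne u hu ((sup_le le_rfl hIle) h2)
  · intro z hz e he φ hφ
    have h1 := hcompat e he φ hφ z hz
    have hMle2 : sSup I.minimalPrimes ≤ Ideal.span (Set.range
        (MvPolynomial.X : Fin d → MvPolynomial (Fin d) k)) :=
      le_trans hMle (le_of_eq hspan.symm)
    exact Ideal.map_mono hMle2 h1
end

section
/- Let R be an F-finite ring of prime characteristic, let Q be a P-primary ideal of R, and let W be a multiplicative set with W ∩ P = ∅. Then the Cartier core of Q·W⁻¹R in W⁻¹R (with respect to all Cartier maps of W⁻¹R arising by localization) contracts to the Cartier core of Q in R: C_{W⁻¹R}(Q W⁻¹R) ∩ R = C_R(Q). -/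
lemma mem_cartierCore {R : Type*} [CommRing R] {p : ℕ} {J : Ideal R} {x : R} :
    x ∈ cartierCore p J ↔ ∀ e, 0 < e → ∀ φ : R →+ R, IsCartierMap p e φ → φ x ∈ J :=
  Iff.rfl

section CartierAux

def TwMod {R S : Type*} [CommRing R] [CommRing S] (_g : R →+* S) : Type _ := S

variable {R S : Type*} [CommRing R] [CommRing S]

instance (g : R →+* S) : AddCommGroup (TwMod g) := inferInstanceAs (AddCommGroup S)

instance (g : R →+* S) : Module R (TwMod g) := Module.compHom S g

def TwMod.of (g : R →+* S) (x : S) : TwMod g := x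

def TwMod.un (g : R →+* S) (x : TwMod g) : S := x

@[simp] lemma TwMod.un_of (g : R →+* S) (x : S) : TwMod.un g (TwMod.of g x) = x := rfl
@[simp] lemma TwMod.of_un (g : R →+* S) (x : TwMod g) : TwMod.of g (TwMod.un g x) = x := rfl
@[simp] lemma TwMod.un_add (g : R →+* S) (x y : TwMod g) :
    TwMod.un g (x + y) = TwMod.un g x + TwMod.un g y := rfl
@[simp] lemma TwMod.un_smul (g : R →+* S) (r : R) (x : TwMod g) :
    TwMod.un g (r • x) = g r * TwMod.un g x := rfl
lemma TwMod.smul_def (g : R →+* S) (r : R) (x : TwMod g) :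
    r • x = TwMod.of g (g r * TwMod.un g x) := rfl
lemma TwMod.of_injective (g : R →+* S) : Function.Injective (TwMod.of g) := fun _ _ h => h
lemma TwMod.un_injective (g : R →+* S) : Function.Injective (TwMod.un g) := fun _ _ h => h

variable (p e : ℕ) [Fact p.Prime] [CharP R p] (W : Submonoid R)

noncomputable def frobLocHom : R →+* Localization W :=
  (algebraMap R (Localization W)).comp (iterateFrobenius R p e)

lemma frobLocHom_apply (x : R) :
    frobLocHom p e W x = algebraMap R (Localization W) x ^ p ^ e := by
  simp [frobLocHom, iterateFrobenius_def, map_pow]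

noncomputable def cartLocMap :
    TwMod (iterateFrobenius R p e) →ₗ[R] TwMod (frobLocHom p e W) where
  toFun x := TwMod.of _ (algebraMap R (Localization W) (TwMod.un _ x))
  map_add' x y := by
    apply TwMod.un_injective
    simp
  map_smul' r x := by
    apply TwMod.un_injective
    simp only [TwMod.un_smul, TwMod.un_of, map_mul, RingHom.id_apply]
    rw [frobLocHom]
    rfl

@[simp] lemma cartLocMap_apply (x : TwMod (iterateFrobenius R p e)) :
    cartLocMap p e W x = TwMod.of _ (algebraMap R (Localization W) (TwMod.un _ x)) := rfl

instance cartLoc_isLocalizedModule : IsLocalizedModule W (cartLocMap p e W) := by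
  have hq : p ^ e = (p ^ e - 1) + 1 :=
    (Nat.succ_pred_eq_of_pos (pow_pos (Fact.out : p.Prime).pos e)).symm
  constructor
  · intro w
    obtain ⟨u, hu⟩ := IsLocalization.map_units (Localization W)
      ⟨(w : R) ^ p ^ e, pow_mem w.2 _⟩
    have key : ∀ x : TwMod (frobLocHom p e W),
        algebraMap R (Module.End R (TwMod (frobLocHom p e W))) (w : R) x
          = TwMod.of _ ((u : Localization W) * TwMod.un _ x) := by
      intro x
      rw [Module.algebraMap_end_apply, TwMod.smul_def, frobLocHom_apply, ← map_pow, hu]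
    rw [Module.End.isUnit_iff]
    constructor
    · intro a b hab
      rw [key a, key b] at hab
      have := TwMod.of_injective _ hab
      apply TwMod.un_injective
      exact (Units.mul_right_inj u).mp this
    · intro y
      refine ⟨TwMod.of _ (((u⁻¹ : (Localization W)ˣ) : Localization W) * TwMod.un _ y), ?_⟩
      rw [key]
      apply TwMod.un_injective
      simp [Units.mul_inv_cancel_left]
  · intro y
    obtain ⟨⟨a, u⟩, hy⟩ := IsLocalization.surj (M := W) (TwMod.un _ y)
    refine ⟨⟨TwMod.of _ (a * (u : R) ^ (p ^ e - 1)), u⟩, ?_⟩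
    apply TwMod.un_injective
    rw [Submonoid.smul_def, TwMod.un_smul, cartLocMap_apply, TwMod.un_of, TwMod.un_of,
      frobLocHom_apply, hq, pow_succ, mul_assoc,
      mul_comm (algebraMap R (Localization W) ↑u) (TwMod.un _ y), hy, map_mul, map_pow]
    ring_nf
    rw [Nat.add_sub_cancel_left]
  · intro x₁ x₂ hx
    have hx' : algebraMap R (Localization W) (TwMod.un _ x₁)
        = algebraMap R (Localization W) (TwMod.un _ x₂) := TwMod.of_injective _ hx
    obtain ⟨c, hc⟩ := (IsLocalization.eq_iff_exists W (Localization W)).mp hx'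
    refine ⟨c, ?_⟩
    apply TwMod.un_injective
    rw [Submonoid.smul_def, Submonoid.smul_def, TwMod.un_smul, TwMod.un_smul,
      iterateFrobenius_def, hq, pow_succ, mul_assoc, mul_assoc, hc]

lemma iterateFrobenius_finite (f : R →+* R) (hf : ∀ x, f x = x ^ p) (hfin : f.Finite) :
    (iterateFrobenius R p e).Finite := by
  induction e with
  | zero => rw [iterateFrobenius_zero]; exact RingHom.Finite.id R
  | succ n ih =>
      have : iterateFrobenius R p (n + 1) = (iterateFrobenius R p n).comp f := by
        ext x
        rw [RingHom.comp_apply, hf, iterateFrobenius_def, iterateFrobenius_def, ← pow_mul,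
          pow_succ, mul_comm (p ^ n) p]
      rw [this]
      exact RingHom.Finite.comp ih hfin

lemma twMod_finite (f : R →+* R) (hf : ∀ x, f x = x ^ p) (hfin : f.Finite) :
    Module.Finite R (TwMod (iterateFrobenius R p e)) :=
  iterateFrobenius_finite p e f hf hfin

end CartierAux


/-- the Cartier core of Q·W⁻¹R in W⁻¹R contracts to the Cartier core of Q,
for Q a P-primary ideal and W a multiplicative set disjoint from P. -/
theorem cartierCore_localization {R : Type*} [CommRing R] [IsNoetherianRing R] (p : ℕ)
    [Fact p.Prime] [CharP R p] (hFF : FFinite R p) (P Q : Ideal R) (hP : P.IsPrime)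
    (hQ : Q.IsPrimary) (hrad : Q.radical = P) (W : Submonoid R)
    (hW : Disjoint (W : Set R) (P : Set R)) :
    (cartierCore p (Q.map (algebraMap R (Localization W)))).comap
        (algebraMap R (Localization W)) =
      cartierCore p Q := by
  obtain ⟨f, hf, hfin⟩ := hFF
  set L := Localization W with hLdef
  ext r
  simp only [Ideal.mem_comap, mem_cartierCore]
  constructor
  · intro hr e he φ hφ
    haveI : Module.Finite R (TwMod (iterateFrobenius R p e)) := twMod_finite p e f hf hfin
    haveI : Module.FinitePresentation R (TwMod (iterateFrobenius R p e)) :=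
      Module.finitePresentation_of_finite R _
    let Φ : TwMod (iterateFrobenius R p e) →ₗ[R] R :=
      { toFun := fun x => φ (TwMod.un _ x)
        map_add' := fun x y => φ.map_add _ _
        map_smul' := fun c x => by
          simp only [TwMod.un_smul, iterateFrobenius_def, RingHom.id_apply, smul_eq_mul]
          exact hφ c (TwMod.un _ x) }
    let ψl := IsLocalizedModule.map W (cartLocMap p e W) (Algebra.linearMap R L) Φ
    let ψ : L →+ L := AddMonoidHom.mk' (fun x => ψl (TwMod.of _ x))
      (fun a b => ψl.map_add (TwMod.of _ a) (TwMod.of _ b))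
    have hψcart : IsCartierMap p e ψ := by
      intro y x
      obtain ⟨⟨s, u⟩, hy⟩ := IsLocalization.surj (M := W) y
      have hu : IsUnit (algebraMap R L (u : R)) := IsLocalization.map_units L u
      apply hu.mul_left_cancel
      have h2 : (u : R) • TwMod.of (frobLocHom p e W) (y ^ p ^ e * x)
          = s • TwMod.of (frobLocHom p e W) x := by
        apply TwMod.un_injective
        simp only [TwMod.un_smul, TwMod.un_of, frobLocHom_apply]
        calc algebraMap R L ↑u ^ p ^ e * (y ^ p ^ e * x)
            = (y * algebraMap R L ↑u) ^ p ^ e * x := by rw [mul_pow]; ring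
          _ = algebraMap R L s ^ p ^ e * x := by rw [hy]
      have h3 := congrArg ψl h2
      rw [map_smul, map_smul, Algebra.smul_def, Algebra.smul_def] at h3
      calc algebraMap R L ↑u * ψ (y ^ p ^ e * x)
          = algebraMap R L s * ψ x := h3
        _ = (y * algebraMap R L ↑u) * ψ x := by rw [hy]
        _ = algebraMap R L ↑u * (y * ψ x) := by ring
    have hmem := hr e he ψ hψcart
    have heq : ψ (algebraMap R L r) = algebraMap R L (φ r) := by
      show ψl (TwMod.of _ (algebraMap R L r)) = _
      have h0 : TwMod.of (frobLocHom p e W) (algebraMap R L r)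
          = cartLocMap p e W (TwMod.of _ r) := rfl
      rw [h0, IsLocalizedModule.map_apply]
      rfl
    rw [heq] at hmem
    rw [IsLocalization.mem_map_algebraMap_iff W L] at hmem
    obtain ⟨⟨a, w⟩, hm⟩ := hmem
    have h1 : algebraMap R L (φ r * (w : R)) = algebraMap R L (a : R) := by
      rw [map_mul]; exact hm
    obtain ⟨c, hc⟩ := (IsLocalization.eq_iff_exists W L).mp h1
    have hmem2 : φ r * ((w : R) * (c : R)) ∈ Q := by
      have h4 : (c : R) * (a : R) ∈ Q := Q.mul_mem_left _ a.2
      rw [← hc] at h4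
      have h5 : φ r * ((w : R) * (c : R)) = ↑c * (φ r * ↑w) := by ring
      rw [h5]; exact h4
    rcases (Ideal.isPrimary_iff.mp hQ).2 hmem2 with h | h
    · exact h
    · exact absurd (hrad ▸ h) (fun hp => Set.disjoint_left.mp hW (mul_mem w.2 c.2) hp)
  · intro hr e he ψ hψ
    haveI : Module.Finite R (TwMod (iterateFrobenius R p e)) := twMod_finite p e f hf hfin
    haveI : Module.FinitePresentation R (TwMod (iterateFrobenius R p e)) :=
      Module.finitePresentation_of_finite R _
    let Ψ : TwMod (frobLocHom p e W) →ₗ[R] L :=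
      { toFun := fun x => ψ (TwMod.un _ x)
        map_add' := fun x y => ψ.map_add _ _
        map_smul' := fun c x => by
          simp only [TwMod.un_smul, frobLocHom_apply, RingHom.id_apply]
          rw [Algebra.smul_def]
          exact hψ (algebraMap R L c) (TwMod.un _ x) }
    obtain ⟨⟨Φ, w⟩, hw⟩ := IsLocalizedModule.surj W
      (IsLocalizedModule.map W (cartLocMap p e W) (Algebra.linearMap R L)) Ψ
    have hφ : IsCartierMap p e (AddMonoidHom.mk' (fun x => Φ (TwMod.of _ x))
        (fun a b => Φ.map_add (TwMod.of _ a) (TwMod.of _ b))) := by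
      intro c x
      have h5 : c • TwMod.of (iterateFrobenius R p e) x = TwMod.of _ (c ^ p ^ e * x) := by
        apply TwMod.un_injective
        simp [iterateFrobenius_def]
      have h6 := Φ.map_smul c (TwMod.of (iterateFrobenius R p e) x)
      rw [h5] at h6
      exact h6
    have hQr : Φ (TwMod.of _ r) ∈ Q := hr e he _ hφ
    have heval := LinearMap.congr_fun hw (cartLocMap p e W (TwMod.of _ r))
    rw [IsLocalizedModule.map_apply, LinearMap.smul_apply] at heval
    have hw' : algebraMap R L (w : R) * ψ (algebraMap R L r)
        = algebraMap R L (Φ (TwMod.of _ r)) := by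
      rw [Submonoid.smul_def, Algebra.smul_def] at heval
      exact heval
    have hu : IsUnit (algebraMap R L (w : R)) := IsLocalization.map_units L w
    have hfin2 : ψ (algebraMap R L r)
        = ↑hu.unit⁻¹ * algebraMap R L (Φ (TwMod.of _ r)) := by
      rw [← hw', ← mul_assoc, IsUnit.val_inv_mul, one_mul]
    rw [hfin2]
    exact Ideal.mul_mem_left _ _ (Ideal.mem_map_of_mem _ hQr)
end
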